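/- Let n ≥ 2 and let Φ and Ψ be trace-preserving superoperators on n×n complex matrices. Then the absorbing property holds: 𝔓(𝔓(Φ) ∘ Ψ) = 𝔓(Φ ∘ 𝔓(Ψ)) = 𝔓(Φ) ∘ 𝔓(Ψ). -/

import Mathlib

set_option maxHeartbeats 1000000


open Matrix

/-- The superoperator `X ↦ (Tr X) • I` on `n × n` complex matrices. -/
noncomputable def traceMap (n : ℕ) :
    Matrix (Fin n) (Fin n) ℂ →ₗ[ℂ] Matrix (Fin n) (Fin n) ℂ :=
  (LinearMap.toSpanSingleton ℂ _ (1 : Matrix (Fin n) (Fin n) ℂ)).comp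
    (Matrix.traceLinearMap (Fin n) ℂ ℂ)

/-- The depolarizing superoperator `Λ_p : X ↦ p • X + (1 - p) • (Tr X / n) • I`. -/
noncomputable def depol (n : ℕ) (p : ℂ) :
    Matrix (Fin n) (Fin n) ℂ →ₗ[ℂ] Matrix (Fin n) (Fin n) ℂ :=
  p • LinearMap.id + ((1 - p) / (n : ℂ)) • traceMap n

/-- The superoperator trace `tr Φ = Σ_{k,m} (Φ E_{km})_{km}`. -/
noncomputable def supertrace (n : ℕ)
    (Φ : Matrix (Fin n) (Fin n) ℂ →ₗ[ℂ] Matrix (Fin n) (Fin n) ℂ) : ℂ :=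
  ∑ k : Fin n, ∑ m : Fin n, (Φ (Matrix.single k m 1)) k m

/-- The twirling hyperprojector with respect to the full unitary group. -/
noncomputable def twirl (n : ℕ)
    (Φ : Matrix (Fin n) (Fin n) ℂ →ₗ[ℂ] Matrix (Fin n) (Fin n) ℂ) :
    Matrix (Fin n) (Fin n) ℂ →ₗ[ℂ] Matrix (Fin n) (Fin n) ℂ :=
  ((((n : ℂ) * Matrix.trace (Φ 1) - supertrace n Φ) / ((n : ℂ) * ((n : ℂ) ^ 2 - 1))) •
      traceMap n) +
    ((((n : ℂ) * supertrace n Φ - Matrix.trace (Φ 1)) / ((n : ℂ) * ((n : ℂ) ^ 2 - 1))) •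
      LinearMap.id)

lemma traceMap_apply (n : ℕ) (X : Matrix (Fin n) (Fin n) ℂ) :
    traceMap n X = X.trace • (1 : Matrix (Fin n) (Fin n) ℂ) := rfl

lemma trace_std (n : ℕ) (k m : Fin n) :
    (Matrix.single k m (1:ℂ)).trace = if k = m then 1 else 0 := by
  by_cases h : k = m
  · subst h; simp [Matrix.trace, Matrix.diag, Matrix.single, Finset.sum_ite_eq]
  · simp only [Matrix.trace, Matrix.diag, if_neg h]
    refine Finset.sum_eq_zero fun i _ => ?_
    simp only [Matrix.single, Matrix.of_apply, ite_eq_right_iff, one_ne_zero]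
    exact fun hh => absurd (hh.1.trans hh.2.symm) h

lemma supertrace_add (n : ℕ) (A B : Matrix (Fin n) (Fin n) ℂ →ₗ[ℂ] Matrix (Fin n) (Fin n) ℂ) :
    supertrace n (A + B) = supertrace n A + supertrace n B := by
  simp [supertrace, Finset.sum_add_distrib]

lemma supertrace_smul (n : ℕ) (a : ℂ) (A : Matrix (Fin n) (Fin n) ℂ →ₗ[ℂ] Matrix (Fin n) (Fin n) ℂ) :
    supertrace n (a • A) = a * supertrace n A := by
  simp [supertrace, Finset.mul_sum]

lemma supertrace_tm_comp (n : ℕ) (Ψ : Matrix (Fin n) (Fin n) ℂ →ₗ[ℂ] Matrix (Fin n) (Fin n) ℂ)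
    (hΨ : ∀ X, Matrix.trace (Ψ X) = Matrix.trace X) :
    supertrace n (traceMap n ∘ₗ Ψ) = n := by
  simp [supertrace, traceMap_apply, hΨ, trace_std, Matrix.one_apply, Finset.sum_ite_eq]

lemma supertrace_comp_tm (n : ℕ) (Φ : Matrix (Fin n) (Fin n) ℂ →ₗ[ℂ] Matrix (Fin n) (Fin n) ℂ) :
    supertrace n (Φ ∘ₗ traceMap n) = (Φ 1).trace := by
  simp only [supertrace, LinearMap.comp_apply, traceMap_apply, _root_.map_smul, trace_std,
    Matrix.smul_apply, smul_eq_mul, ite_mul, one_mul, zero_mul]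
  simp [Matrix.trace, Matrix.diag, Finset.sum_ite_eq, Finset.sum_ite_eq']

lemma trace_combo (n : ℕ) (a b : ℂ) (X : Matrix (Fin n) (Fin n) ℂ) :
    ((a • traceMap n + b • (LinearMap.id : Matrix (Fin n) (Fin n) ℂ →ₗ[ℂ] Matrix (Fin n) (Fin n) ℂ)) X).trace
      = (a * n + b) * X.trace := by
  simp [traceMap_apply, Matrix.trace_smul, Matrix.trace_one]
  ring

lemma twirl_eq (n : ℕ) (M : Matrix (Fin n) (Fin n) ℂ →ₗ[ℂ] Matrix (Fin n) (Fin n) ℂ) :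
    twirl n M = (((n : ℂ) * (M 1).trace - supertrace n M) / ((n : ℂ) * ((n : ℂ) ^ 2 - 1))) •
      traceMap n +
    (((n : ℂ) * supertrace n M - (M 1).trace) / ((n : ℂ) * ((n : ℂ) ^ 2 - 1))) •
      LinearMap.id := rfl

lemma combo_comp_combo (n : ℕ) (a b c d : ℂ) :
    (a • traceMap n + b • (LinearMap.id : Matrix (Fin n) (Fin n) ℂ →ₗ[ℂ] _)) ∘ₗ
      (c • traceMap n + d • LinearMap.id)
    = (a * c * n + a * d + b * c) • traceMap n + (b * d) • LinearMap.id := by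
  apply LinearMap.ext; intro X
  simp only [LinearMap.comp_apply, LinearMap.add_apply, LinearMap.smul_apply, LinearMap.id_apply,
    traceMap_apply, Matrix.trace_add, Matrix.trace_smul, Matrix.trace_one, smul_eq_mul,
    Fintype.card_fin, map_add, _root_.map_smul]
  match_scalars <;> ring

lemma supertrace_combo_comp (n : ℕ) (a b : ℂ)
    (Ψ : Matrix (Fin n) (Fin n) ℂ →ₗ[ℂ] Matrix (Fin n) (Fin n) ℂ)
    (hΨ : ∀ X, Matrix.trace (Ψ X) = Matrix.trace X) :
    supertrace n ((a • traceMap n + b • (LinearMap.id : Matrix (Fin n) (Fin n) ℂ →ₗ[ℂ] _)) ∘ₗ Ψ)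
      = a * n + b * supertrace n Ψ := by
  rw [LinearMap.add_comp, LinearMap.smul_comp, LinearMap.smul_comp, LinearMap.id_comp,
    supertrace_add, supertrace_smul, supertrace_smul, supertrace_tm_comp n Ψ hΨ]

lemma supertrace_comp_combo (n : ℕ) (a b : ℂ)
    (Φ : Matrix (Fin n) (Fin n) ℂ →ₗ[ℂ] Matrix (Fin n) (Fin n) ℂ) :
    supertrace n (Φ ∘ₗ (a • traceMap n + b • (LinearMap.id : Matrix (Fin n) (Fin n) ℂ →ₗ[ℂ] _)))
      = a * (Φ 1).trace + b * supertrace n Φ := by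
  rw [LinearMap.comp_add, LinearMap.comp_smul, LinearMap.comp_smul, LinearMap.comp_id,
    supertrace_add, supertrace_smul, supertrace_smul, supertrace_comp_tm]

/-- Absorbing property `𝔓(𝔓(Φ)Ψ) = 𝔓(Φ𝔓(Ψ)) = 𝔓(Φ)𝔓(Ψ)`
for trace-preserving `Φ`, `Ψ`. -/
theorem twirl_absorbing (n : ℕ) (hn : 2 ≤ n)
    (Φ Ψ : Matrix (Fin n) (Fin n) ℂ →ₗ[ℂ] Matrix (Fin n) (Fin n) ℂ)
    (hΦ : ∀ X, Matrix.trace (Φ X) = Matrix.trace X)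
    (hΨ : ∀ X, Matrix.trace (Ψ X) = Matrix.trace X) :
    twirl n (twirl n Φ ∘ₗ Ψ) = twirl n (Φ ∘ₗ twirl n Ψ) ∧
    twirl n (Φ ∘ₗ twirl n Ψ) = twirl n Φ ∘ₗ twirl n Ψ := by
  have hn0 : (n : ℂ) ≠ 0 := Nat.cast_ne_zero.mpr (by omega)
  have hn1 : ((n : ℂ) ^ 2 - 1) ≠ 0 := by
    have h : ((n : ℂ)) ^ 2 = ((n ^ 2 : ℕ) : ℂ) := by push_cast; ring
    rw [h, sub_ne_zero]
    exact_mod_cast Nat.ne_of_gt (by nlinarith : 1 < n ^ 2)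
  have htr1 : (1 : Matrix (Fin n) (Fin n) ℂ).trace = n := by
    simp [Matrix.trace_one]
  have hΦ1 : (Φ 1).trace = n := by rw [hΦ, htr1]
  have hΨ1 : (Ψ 1).trace = n := by rw [hΨ, htr1]
  set D : ℂ := (n : ℂ) * ((n : ℂ) ^ 2 - 1) with hD
  set t1 := supertrace n Φ with ht1
  set t2 := supertrace n Ψ with ht2
  set a1 : ℂ := ((n : ℂ) * n - t1) / D with ha1
  set b1 : ℂ := ((n : ℂ) * t1 - n) / D with hb1
  set a2 : ℂ := ((n : ℂ) * n - t2) / D with ha2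
  set b2 : ℂ := ((n : ℂ) * t2 - n) / D with hb2
  have htwΦ : twirl n Φ = a1 • traceMap n + b1 • LinearMap.id := by
    rw [twirl_eq, hΦ1]
  have htwΨ : twirl n Ψ = a2 • traceMap n + b2 • LinearMap.id := by
    rw [twirl_eq, hΨ1]
  -- data for M1 = twirl Φ ∘ Ψ
  have hM1tr : ((twirl n Φ ∘ₗ Ψ) 1).trace = (a1 * n + b1) * n := by
    rw [LinearMap.comp_apply, htwΦ, trace_combo, hΨ1]
  have hM1st : supertrace n (twirl n Φ ∘ₗ Ψ) = a1 * n + b1 * t2 := by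
    rw [htwΦ, supertrace_combo_comp n a1 b1 Ψ hΨ]
  -- data for M2 = Φ ∘ twirl Ψ
  have hM2tr : ((Φ ∘ₗ twirl n Ψ) 1).trace = (a2 * n + b2) * n := by
    rw [LinearMap.comp_apply, hΦ, htwΨ, trace_combo, htr1]
  have hM2st : supertrace n (Φ ∘ₗ twirl n Ψ) = a2 * n + b2 * t1 := by
    rw [htwΨ, supertrace_comp_combo n a2 b2 Φ, hΦ1]
  have key : ∀ c d c' d' : ℂ, c = c' → d = d' →
      c • traceMap n + d • (LinearMap.id : Matrix (Fin n) (Fin n) ℂ →ₗ[ℂ] _)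
        = c' • traceMap n + d' • LinearMap.id := by
    rintro c d c' d' rfl rfl; rfl
  constructor
  · rw [twirl_eq n (twirl n Φ ∘ₗ Ψ), twirl_eq n (Φ ∘ₗ twirl n Ψ),
      hM1tr, hM1st, hM2tr, hM2st]
    refine key _ _ _ _ ?_ ?_ <;>
      · simp only [ha1, hb1, ha2, hb2, hD]; field_simp; ring
  · rw [twirl_eq n (Φ ∘ₗ twirl n Ψ), hM2tr, hM2st, htwΦ, htwΨ, combo_comp_combo]
    refine key _ _ _ _ ?_ ?_ <;>
      · simp only [ha1, hb1, ha2, hb2, hD]; field_simp; ring
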